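/- arXiv:1709.02155 — 4 statements merged into one kernel-verified Lean document; each statement's English description precedes it below -/
import Mathlib

section
/- For any constant c ≥ 0 and integer k ≥ 1, the function Φ(r) = 2·arctan(c·r^k) satisfies on (0,∞) the ordinary differential equation Φ''(r) + (n−1)Φ'(r)/r − 𝔢_k·sin(2Φ(r))/r² = 0 with n = 2 and 𝔢_k = k²/2. -/
open Real

lemma sin_four_arctan (x : ℝ) :
    Real.sin (2 * (2 * Real.arctan x)) = 4 * x * (1 - x ^ 2) / (1 + x ^ 2) ^ 2 := by
  have h1 : (0:ℝ) < 1 + x ^ 2 := by positivity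
  have hs2 : Real.sqrt (1 + x ^ 2) ^ 2 = 1 + x ^ 2 := Real.sq_sqrt h1.le
  have hs0 : Real.sqrt (1 + x ^ 2) ≠ 0 := by positivity
  rw [Real.sin_two_mul, Real.sin_two_mul, Real.cos_two_mul, Real.sin_arctan, Real.cos_arctan]
  have e1 : 2 * (x / Real.sqrt (1 + x ^ 2)) * (1 / Real.sqrt (1 + x ^ 2))
      = 2 * (x / (1 + x ^ 2)) := by
    rw [mul_assoc, div_mul_div_comm, mul_one, ← sq, hs2]
  have e2 : (1 / Real.sqrt (1 + x ^ 2)) ^ 2 = 1 / (1 + x ^ 2) := by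
    rw [div_pow, one_pow, hs2]
  rw [e1, e2]
  have h0 : (1 + x ^ 2) ≠ 0 := h1.ne'
  field_simp
  ring

/-- For `c ≥ 0` and `k ≥ 1`, the function `Φ(r) = 2 arctan (c r^k)` solves the
rotationally symmetric harmonic map ODE for `n = 2`, `𝔢_k = k²/2`, on `(0,∞)`. -/
theorem stmt0 (c : ℝ) (hc : 0 ≤ c) (k : ℕ) (hk : 1 ≤ k)
    (Φ : ℝ → ℝ) (hΦ : ∀ r, Φ r = 2 * Real.arctan (c * r ^ k)) :
    ∀ r : ℝ, 0 < r →
      deriv (deriv Φ) r + ((2 : ℝ) - 1) * deriv Φ r / r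
        - ((k : ℝ) ^ 2 / 2) * Real.sin (2 * Φ r) / r ^ 2 = 0 := by
  obtain ⟨m, rfl⟩ : ∃ m, k = m + 1 := ⟨k - 1, (Nat.succ_pred_eq_of_pos hk).symm⟩
  have hΦF : Φ = fun t => 2 * Real.arctan (c * t ^ (m + 1)) := funext hΦ
  subst hΦF
  intro r hr
  have hr0 : r ≠ 0 := hr.ne'
  -- derivative of inner function at any point
  have hp : ∀ s : ℝ, HasDerivAt (fun t => c * t ^ (m + 1)) (c * ((m + 1 : ℕ) * s ^ m)) s := by
    intro s
    simpa using (hasDerivAt_pow (m + 1) s).const_mul c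
  -- first derivative
  have h1 : ∀ s : ℝ, HasDerivAt (fun t => 2 * Real.arctan (c * t ^ (m + 1)))
      (2 * (1 / (1 + (c * s ^ (m + 1)) ^ 2) * (c * ((m + 1 : ℕ) * s ^ m)))) s := by
    intro s
    exact ((Real.hasDerivAt_arctan (c * s ^ (m + 1))).comp s (hp s)).const_mul 2
  have hd1 : deriv (fun t => 2 * Real.arctan (c * t ^ (m + 1)))
      = fun s => 2 * (1 / (1 + (c * s ^ (m + 1)) ^ 2) * (c * ((m + 1 : ℕ) * s ^ m))) :=
    funext fun s => (h1 s).deriv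
  set x := c * r ^ (m + 1) with hx
  have hDpos : (0:ℝ) < 1 + x ^ 2 := by positivity
  have hD : (1 + x ^ 2) ≠ 0 := hDpos.ne'
  -- alternative form of the first derivative near r
  set h : ℝ → ℝ := fun s => 2 * c * ((m:ℝ) + 1) * s ^ (m + 1) / (s * (1 + (c * s ^ (m + 1)) ^ 2))
    with hh
  have hev : deriv (fun t => 2 * Real.arctan (c * t ^ (m + 1))) =ᶠ[nhds r] h := by
    filter_upwards [Ioi_mem_nhds hr] with s hs
    have hs0 : s ≠ 0 := (ne_of_gt hs)
    have hDs : (1 + (c * s ^ (m + 1)) ^ 2) ≠ 0 := by positivity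
    rw [hd1]
    simp only [hh]
    field_simp
    push_cast
    ring
  -- second derivative via quotient rule on h
  have hu : HasDerivAt (fun s : ℝ => 2 * c * ((m:ℝ) + 1) * s ^ (m + 1))
      (2 * c * ((m:ℝ) + 1) * ((m + 1 : ℕ) * r ^ m)) r :=
    by simpa using (hasDerivAt_pow (m + 1) r).const_mul (2 * c * ((m:ℝ) + 1))
  have hvin : HasDerivAt (fun s : ℝ => 1 + (c * s ^ (m + 1)) ^ 2)
      ((2 : ℕ) * (c * r ^ (m + 1)) ^ 1 * (c * ((m + 1 : ℕ) * r ^ m))) r := by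
    simpa using ((hp r).pow 2).const_add 1
  have hv : HasDerivAt (fun s : ℝ => s * (1 + (c * s ^ (m + 1)) ^ 2))
      (1 * (1 + (c * r ^ (m + 1)) ^ 2)
        + r * ((2 : ℕ) * (c * r ^ (m + 1)) ^ 1 * (c * ((m + 1 : ℕ) * r ^ m)))) r :=
    (hasDerivAt_id r).mul hvin
  have hv0 : r * (1 + (c * r ^ (m + 1)) ^ 2) ≠ 0 := by
    apply mul_ne_zero hr0
    rw [← hx]; exact hD
  have hdiv := hu.div hv hv0
  have hd2 : deriv (deriv (fun t => 2 * Real.arctan (c * t ^ (m + 1)))) r = deriv h r :=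
    hev.deriv_eq
  rw [hd2, HasDerivAt.deriv (f := h) hdiv, hd1]
  -- sine term
  have hΦr : (2 : ℝ) * (2 * Real.arctan (c * r ^ (m + 1))) = 2 * (2 * Real.arctan x) := by
    rw [hx]
  rw [hΦr, sin_four_arctan]
  have hpow : r ^ (m + 1) = r ^ m * r := pow_succ r m
  have hxr : x = c * (r ^ m * r) := by rw [hx, hpow]
  push_cast
  rw [hxr] at hD ⊢
  field_simp
  ring
end

section
/- Let Ψ : ℝ → ℝ be a non-constant C² solution of Ψ''(t) + (n−2)Ψ'(t) − 2𝔢·sin(Ψ(t))·cos(Ψ(t)) = 0 with n ≥ 3, 𝔢 > 0, and suppose lim_{t→−∞} Ψ'(t) = 0 and lim_{t→−∞} sin(Ψ(t)) = 0. Then there is no t₀ ∈ ℝ with Ψ(t₀) ∈ πℤ; consequently there exists k₀ ∈ ℤ with k₀π < Ψ(t) < (k₀+1)π for all t. -/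
/-!
The energy `V = ψ'² - 2e sin² ψ` of a solution of `ψ'' + (n - 2) ψ' = 2e sin ψ cos ψ`
satisfies `V' = -2 (n - 2) ψ'² ≤ 0` and `V → 0` at `-∞`, so `V ≤ 0` everywhere.
At a time where `ψ ∈ πℤ` this forces `ψ' = 0`; but `(kπ, 0)` is an equilibrium of the
globally Lipschitz phase-plane system, so by uniqueness `ψ` would be constant.
A continuous function avoiding `πℤ` stays in one strip `(kπ, (k + 1)π)` by the
intermediate value theorem.
-/

open Real Filter Set

theorem exists_int_mul_lt_lt_of_forall_ne_int_mul {X : Type*} [TopologicalSpace X]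
    [PreconnectedSpace X] [Nonempty X] {f : X → ℝ} (hf : Continuous f) {a : ℝ} (ha : 0 < a)
    (hne : ∀ x, ∀ k : ℤ, f x ≠ k * a) :
    ∃ k : ℤ, ∀ x, k * a < f x ∧ f x < (k + 1) * a := by
  obtain ⟨x₀⟩ := ‹Nonempty X›
  have notMem_range (k : ℤ) : (k : ℝ) * a ∉ range f := by
    rintro ⟨x, hx⟩
    exact hne x k hx
  refine ⟨⌊f x₀ / a⌋, fun x => ⟨?_, ?_⟩⟩
  · have hle : (⌊f x₀ / a⌋ : ℝ) * a ≤ f x₀ := (le_div_iff₀ ha).1 (Int.floor_le _)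
    by_contra! h
    exact notMem_range _ (mem_range_of_exists_le_of_exists_ge hf ⟨x, h⟩ ⟨x₀, hle⟩)
  · have hlt : f x₀ < (⌊f x₀ / a⌋ + 1 : ℝ) * a :=
      (div_lt_iff₀ ha).1 (Int.lt_floor_add_one _)
    by_contra! h
    refine notMem_range (⌊f x₀ / a⌋ + 1) ?_
    push_cast
    exact mem_range_of_exists_le_of_exists_ge hf ⟨x₀, hlt.le⟩ ⟨x, h⟩

/-- The phase-plane vector field of `ψ'' + c ψ' = 2e sin ψ cos ψ`, written with
`2 sin ψ cos ψ = sin 2ψ`. -/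
noncomputable def dampedPendulumField (c e : ℝ) (p : ℝ × ℝ) : ℝ × ℝ :=
  (p.2, e * sin (2 * p.1) - c * p.2)

theorem exists_lipschitzWith_dampedPendulumField (c e : ℝ) :
    ∃ K, LipschitzWith K (dampedPendulumField c e) :=
  ⟨_, LipschitzWith.prod_snd.prodMk <|
    ((lipschitzWith_smul e).comp <| lipschitzWith_sin.comp <|
      (lipschitzWith_smul (2 : ℝ)).comp LipschitzWith.prod_fst).sub
    ((lipschitzWith_smul c).comp LipschitzWith.prod_snd)⟩

theorem dampedPendulumField_int_mul_pi (c e : ℝ) (k : ℤ) :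
    dampedPendulumField c e (k * π, 0) = 0 := by
  have hsin : sin (2 * (k * π)) = 0 := by
    rw [← mul_assoc]
    exact_mod_cast sin_int_mul_pi (2 * k)
  simp [dampedPendulumField, hsin]

structure IsDampedPendulumSolution (c e : ℝ) (ψ : ℝ → ℝ) : Prop where
  differentiable : Differentiable ℝ ψ
  differentiable_deriv : Differentiable ℝ (deriv ψ)
  ode : ∀ t, deriv (deriv ψ) t + c * deriv ψ t - 2 * e * sin (ψ t) * cos (ψ t) = 0

noncomputable def dampedPendulumEnergy (e : ℝ) (ψ : ℝ → ℝ) (t : ℝ) : ℝ :=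
  deriv ψ t ^ 2 - 2 * e * sin (ψ t) ^ 2

namespace IsDampedPendulumSolution

variable {c e : ℝ} {ψ : ℝ → ℝ}

theorem hasDerivAt_phase (hψ : IsDampedPendulumSolution c e ψ) (t : ℝ) :
    HasDerivAt (fun s => (ψ s, deriv ψ s)) (dampedPendulumField c e (ψ t, deriv ψ t)) t := by
  refine ((hψ.differentiable t).hasDerivAt.prodMk
    (hψ.differentiable_deriv t).hasDerivAt).congr_deriv (Prod.ext rfl ?_)
  simp only [dampedPendulumField, sin_two_mul]
  linear_combination hψ.ode t

theorem eq_const_of_eq_int_mul_pi (hψ : IsDampedPendulumSolution c e ψ) {t₀ : ℝ} {k : ℤ}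
    (h : ψ t₀ = k * π) (h' : deriv ψ t₀ = 0) : ψ = fun _ => k * π := by
  obtain ⟨K, hK⟩ := exists_lipschitzWith_dampedPendulumField c e
  have hphase : (fun s => (ψ s, deriv ψ s)) = fun _ => ((k * π : ℝ), (0 : ℝ)) :=
    ODE_solution_unique_univ (v := fun _ => dampedPendulumField c e) (s := fun _ => univ)
      (t₀ := t₀) (fun _ => hK.lipschitzOnWith) (fun t => ⟨hψ.hasDerivAt_phase t, trivial⟩)
      (fun t => ⟨by simpa [dampedPendulumField_int_mul_pi] using hasDerivAt_const t _, trivial⟩)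
      (by simp [h, h'])
  funext t
  exact congrArg Prod.fst (congrFun hphase t)

theorem hasDerivAt_energy (hψ : IsDampedPendulumSolution c e ψ) (t : ℝ) :
    HasDerivAt (dampedPendulumEnergy e ψ) (-2 * c * deriv ψ t ^ 2) t := by
  have hsin := (hψ.differentiable t).hasDerivAt.sin
  refine (((hψ.differentiable_deriv t).hasDerivAt.pow 2).sub
    ((hsin.pow 2).const_mul (2 * e))).congr_deriv ?_
  linear_combination (2 * deriv ψ t) * hψ.ode t

theorem energy_nonpos (hψ : IsDampedPendulumSolution c e ψ) (hc : 0 ≤ c)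
    (hlim : Tendsto (deriv ψ) atBot (nhds 0))
    (hlim_sin : Tendsto (fun t => sin (ψ t)) atBot (nhds 0)) (t : ℝ) :
    dampedPendulumEnergy e ψ t ≤ 0 := by
  have hanti : Antitone (dampedPendulumEnergy e ψ) :=
    antitone_of_deriv_nonpos (fun s => (hψ.hasDerivAt_energy s).differentiableAt) fun s => by
      rw [(hψ.hasDerivAt_energy s).deriv]
      nlinarith [sq_nonneg (deriv ψ s)]
  have hV : Tendsto (dampedPendulumEnergy e ψ) atBot (nhds 0) := by
    have h := (hlim.pow 2).sub ((hlim_sin.pow 2).const_mul (2 * e))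
    norm_num at h
    exact h
  exact ge_of_tendsto hV (eventually_le_atBot t |>.mono fun s hs => hanti hs)

theorem ne_int_mul_pi (hψ : IsDampedPendulumSolution c e ψ) (hc : 0 ≤ c)
    (hlim : Tendsto (deriv ψ) atBot (nhds 0))
    (hlim_sin : Tendsto (fun t => sin (ψ t)) atBot (nhds 0)) (hnc : ∃ a b, ψ a ≠ ψ b)
    (t₀ : ℝ) (k : ℤ) : ψ t₀ ≠ k * π := by
  intro h
  have hV := hψ.energy_nonpos hc hlim hlim_sin t₀
  rw [dampedPendulumEnergy, h, sin_int_mul_pi] at hV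
  have h' : deriv ψ t₀ = 0 := by simpa using hV
  obtain ⟨a, b, hab⟩ := hnc
  rw [hψ.eq_const_of_eq_int_mul_pi h h'] at hab
  exact hab rfl

end IsDampedPendulumSolution

theorem stmt3_general (n : ℕ) (hn : 3 ≤ n) (e : ℝ)
    (Ψ : ℝ → ℝ) (hΨ : ContDiff ℝ 2 Ψ)
    (hODE : ∀ t : ℝ,
      deriv (deriv Ψ) t + ((n : ℝ) - 2) * deriv Ψ t
        - 2 * e * Real.sin (Ψ t) * Real.cos (Ψ t) = 0)
    (hnc : ∃ a b : ℝ, Ψ a ≠ Ψ b)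
    (hlim1 : Tendsto (deriv Ψ) atBot (nhds 0))
    (hlim2 : Tendsto (fun t => Real.sin (Ψ t)) atBot (nhds 0)) :
    (∀ t₀ : ℝ, ∀ k : ℤ, Ψ t₀ ≠ (k : ℝ) * Real.pi) ∧
      ∃ k₀ : ℤ, ∀ t : ℝ,
        (k₀ : ℝ) * Real.pi < Ψ t ∧ Ψ t < ((k₀ : ℝ) + 1) * Real.pi := by
  have hsol : IsDampedPendulumSolution ((n : ℝ) - 2) e Ψ :=
    ⟨hΨ.differentiable two_ne_zero, hΨ.differentiable_deriv_two, hODE⟩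
  have hc : (0 : ℝ) ≤ (n : ℝ) - 2 := by
    rify at hn
    linarith
  have hne := hsol.ne_int_mul_pi hc hlim1 hlim2 hnc
  exact ⟨hne,
    exists_int_mul_lt_lt_of_forall_ne_int_mul hsol.differentiable.continuous pi_pos hne⟩

/-- A non-constant finite-energy solution never takes values in `πℤ`,
and hence stays in an open strip `(k₀π, (k₀+1)π)`. -/
theorem stmt3 (n : ℕ) (hn : 3 ≤ n) (e : ℝ) (he : 0 < e)
    (Ψ : ℝ → ℝ) (hΨ : ContDiff ℝ 2 Ψ)
    (hODE : ∀ t : ℝ,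
      deriv (deriv Ψ) t + ((n : ℝ) - 2) * deriv Ψ t
        - 2 * e * Real.sin (Ψ t) * Real.cos (Ψ t) = 0)
    (hnc : ∃ a b : ℝ, Ψ a ≠ Ψ b)
    (hlim1 : Tendsto (deriv Ψ) atBot (nhds 0))
    (hlim2 : Tendsto (fun t => Real.sin (Ψ t)) atBot (nhds 0)) :
    (∀ t₀ : ℝ, ∀ k : ℤ, Ψ t₀ ≠ (k : ℝ) * Real.pi) ∧
      ∃ k₀ : ℤ, ∀ t : ℝ,
        (k₀ : ℝ) * Real.pi < Ψ t ∧ Ψ t < ((k₀ : ℝ) + 1) * Real.pi :=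
  stmt3_general n hn e Ψ hΨ hODE hnc hlim1 hlim2
end

section
/- For any ρ ∈ [0, π) and k ≥ 1, the function Φ(r) = 2·arctan(r^k · tan(ρ/2)) on [0,1] satisfies Φ(0) = 0, Φ(1) = ρ, and solves Φ''(r) + Φ'(r)/r − k²·sin(Φ(r))cos(Φ(r))/r² = 0 for r ∈ (0,1]. -/
open Real Filter Topology

/-! With `u = r ^ k * tan (ρ / 2)` one has `r Φ' = 2 k u / (1 + u ^ 2) = k sin Φ`, so `Φ` solves the
first-order Euler-type equation `r Φ' = F (Φ)` with `F = k sin`. Differentiating it once more gives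
`r ^ 2 Φ'' + r Φ' = F'(Φ) F(Φ) = k ^ 2 sin Φ cos Φ`. -/

theorem Real.sin_two_mul_arctan (x : ℝ) : sin (2 * arctan x) = 2 * x / (1 + x ^ 2) := by
  have hsq : √(1 + x ^ 2) ^ 2 = 1 + x ^ 2 := sq_sqrt (by positivity)
  have hne : √(1 + x ^ 2) ≠ 0 := by positivity
  rw [sin_two_mul, sin_arctan, cos_arctan]
  field_simp
  rw [hsq]

theorem natCast_mul_pow_pred_mul_self (k : ℕ) (x : ℝ) : (k : ℝ) * x ^ (k - 1) * x = k * x ^ k := by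
  cases k with
  | zero => simp
  | succ m => simp [pow_succ, mul_assoc]

theorem hasDerivAt_two_mul_arctan_pow_mul (k : ℕ) (c : ℝ) {x : ℝ} (hx : x ≠ 0) :
    HasDerivAt (fun r => 2 * arctan (r ^ k * c)) (k * sin (2 * arctan (x ^ k * c)) / x) x := by
  refine ((((hasDerivAt_pow k x).mul_const c).arctan).const_mul 2).congr_deriv ?_
  rw [sin_two_mul_arctan, eq_comm, div_eq_iff hx]
  linear_combination -(2 * c / (1 + (x ^ k * c) ^ 2)) * natCast_mul_pow_pred_mul_self k x

theorem deriv_deriv_add_deriv_div_eq {Φ F : ℝ → ℝ} {F' r : ℝ} (hr : r ≠ 0)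
    (hΦ : ∀ᶠ x in 𝓝 r, HasDerivAt Φ (F (Φ x) / x) x) (hF : HasDerivAt F F' (Φ r)) :
    deriv (deriv Φ) r + deriv Φ r / r = F' * F (Φ r) / r ^ 2 := by
  have hderiv : deriv Φ =ᶠ[𝓝 r] fun x => F (Φ x) / x := hΦ.mono fun x hx => hx.deriv
  have hΦr : HasDerivAt Φ (F (Φ r) / r) r := hΦ.self_of_nhds
  have hquot : HasDerivAt (fun x => F (Φ x) / x) ((F' * (F (Φ r) / r) * r - F (Φ r)) / r ^ 2) r := by
    simpa using (hF.comp r hΦr).fun_div (hasDerivAt_id' r) hr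
  rw [hderiv.deriv_eq, hquot.deriv, hΦr.deriv]
  field_simp
  ring

/-- The explicit solution of the Dirichlet problem for `n = 2`:
`Φ(r) = 2 arctan (r^k tan(ρ/2))` has the right boundary values and solves the ODE. -/
theorem stmt8 (ρ : ℝ) (hρ : ρ ∈ Set.Ico 0 Real.pi) (k : ℕ) (hk : 1 ≤ k)
    (Φ : ℝ → ℝ) (hΦ : ∀ r, Φ r = 2 * Real.arctan (r ^ k * Real.tan (ρ / 2))) :
    Φ 0 = 0 ∧ Φ 1 = ρ ∧
      ∀ r ∈ Set.Ioc (0 : ℝ) 1,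
        deriv (deriv Φ) r + deriv Φ r / r
          - (k : ℝ) ^ 2 * Real.sin (Φ r) * Real.cos (Φ r) / r ^ 2 = 0 := by
  obtain ⟨hρ0, hρπ⟩ := hρ
  have hΦfun : Φ = fun r => 2 * arctan (r ^ k * tan (ρ / 2)) := funext hΦ
  refine ⟨by simp [hΦ, zero_pow (by omega : k ≠ 0)], ?_, fun r hr => ?_⟩
  · rw [hΦ, one_pow, one_mul, arctan_tan (by linarith [pi_pos]) (by linarith)]
    ring
  · have hr : r ≠ 0 := hr.1.ne'
    have hEuler : ∀ᶠ x in 𝓝 r, HasDerivAt Φ (k * sin (Φ x) / x) x := by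
      filter_upwards [isOpen_ne.mem_nhds hr] with x hx
      simpa only [hΦfun] using hasDerivAt_two_mul_arctan_pow_mul k (tan (ρ / 2)) hx
    rw [deriv_deriv_add_deriv_div_eq (F := fun y => k * sin y) hr hEuler
      ((hasDerivAt_sin (Φ r)).const_mul (k : ℝ))]
    ring
end

section
/- Let Ψ : ℝ → ℝ solve Ψ'' + (n−2)Ψ' − 2𝔢 sin Ψ cos Ψ = 0 with n ≥ 3, 𝔢 > 0, 0 < Ψ(t) < π for all t, lim_{t→−∞}(Ψ(t),Ψ'(t)) = (0,0), and suppose (Ψ(t),Ψ'(t)) converges as t → +∞ to an equilibrium of the system. Then lim_{t→∞}(Ψ(t),Ψ'(t)) = (π/2, 0). -/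
open Real Filter Topology

/-!
Along a solution, `V = Ψ'² - 2𝔢 sin² Ψ` satisfies `V' = -2(n-2)Ψ'² ≤ 0`. Since `V → 0` at `-∞`,
the limiting equilibrium `(x, 0)` has `V = -2𝔢 sin² x ≤ 0`; equality would force `V ≡ 0`, hence
`Ψ' ≡ 0` and `sin Ψ ≡ 0`, which is impossible inside the strip. So `sin x ≠ 0`, i.e. `cos x = 0`,
and `x ∈ [0, π]` leaves only `x = π/2`.
-/

noncomputable def lyapunov (e : ℝ) (p : ℝ × ℝ) : ℝ := p.2 ^ 2 - 2 * e * sin p.1 ^ 2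

lemma continuous_lyapunov (e : ℝ) : Continuous (lyapunov e) := by
  unfold lyapunov
  fun_prop

lemma hasDerivAt_lyapunov_comp {Ψ : ℝ → ℝ} {c e t : ℝ}
    (hΨ : DifferentiableAt ℝ Ψ t) (hΨ' : DifferentiableAt ℝ (deriv Ψ) t)
    (hODE : deriv (deriv Ψ) t + c * deriv Ψ t - 2 * e * sin (Ψ t) * cos (Ψ t) = 0) :
    HasDerivAt (fun s => lyapunov e (Ψ s, deriv Ψ s)) (-2 * c * deriv Ψ t ^ 2) t := by
  have hsin := (hasDerivAt_sin (Ψ t)).comp t hΨ.hasDerivAt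
  refine ((hΨ'.hasDerivAt.fun_pow 2).sub ((hsin.fun_pow 2).const_mul (2 * e))).congr_deriv ?_
  simp only [Function.comp_apply]
  linear_combination (2 * deriv Ψ t) * hODE

lemma Antitone.eq_of_tendsto_atBot_atTop {α β : Type*} [LinearOrder α] [Nonempty α]
    [TopologicalSpace β] [PartialOrder β] [OrderClosedTopology β] {f : α → β} {b : β}
    (hf : Antitone f) (hbot : Tendsto f atBot (𝓝 b)) (htop : Tendsto f atTop (𝓝 b)) (x : α) :
    f x = b :=
  le_antisymm (_root_.ge_of_tendsto hbot ((eventually_le_atBot x).mono fun _ hy => hf hy))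
    (_root_.le_of_tendsto htop ((eventually_ge_atTop x).mono fun _ hy => hf hy))

lemma eq_pi_div_two_of_cos_eq_zero {x : ℝ} (hx : x ∈ Set.Icc 0 π) (hcos : cos x = 0) :
    x = π / 2 :=
  injOn_cos hx ⟨by positivity, by linarith [pi_pos]⟩ (by rw [hcos, cos_pi_div_two])

/-- A solution in the strip `0 < Ψ < π` emanating from `(0,0)` which converges to an
equilibrium as `t → ∞` must converge to `(π/2, 0)`. -/
theorem stmt16 (n : ℕ) (hn : 3 ≤ n) (e : ℝ) (he : 0 < e)
    (Ψ : ℝ → ℝ) (hΨ : ContDiff ℝ 2 Ψ)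
    (hODE : ∀ t : ℝ,
      deriv (deriv Ψ) t + ((n : ℝ) - 2) * deriv Ψ t
        - 2 * e * Real.sin (Ψ t) * Real.cos (Ψ t) = 0)
    (hstrip : ∀ t : ℝ, 0 < Ψ t ∧ Ψ t < Real.pi)
    (hbot : Tendsto (fun t => (Ψ t, deriv Ψ t)) atBot (nhds ((0 : ℝ), (0 : ℝ))))
    (htop : ∃ P : ℝ × ℝ,
      (P.2 = 0 ∧ Real.sin P.1 * Real.cos P.1 = 0) ∧
      Tendsto (fun t => (Ψ t, deriv Ψ t)) atTop (nhds P)) :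
    Tendsto (fun t => (Ψ t, deriv Ψ t)) atTop (nhds ((Real.pi / 2 : ℝ), (0 : ℝ))) := by
  obtain ⟨⟨x, y⟩, ⟨rfl, hsincos⟩, hT⟩ := htop
  have hc : (0 : ℝ) < n - 2 := by
    have : (3 : ℝ) ≤ n := mod_cast hn
    linarith
  obtain ⟨hΨd, -, hΨ'⟩ := contDiff_succ_iff_deriv (n := 1).mp hΨ
  set V := fun t => lyapunov e (Ψ t, deriv Ψ t)
  have hV t : HasDerivAt V (-2 * (n - 2) * deriv Ψ t ^ 2) t :=
    hasDerivAt_lyapunov_comp hΨd.differentiableAt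
      (hΨ'.differentiable one_ne_zero).differentiableAt (hODE t)
  have hanti : Antitone V := antitone_of_hasDerivAt_nonpos hV fun t =>
    mul_nonpos_of_nonpos_of_nonneg (by linarith) (sq_nonneg _)
  have hVbot : Tendsto V atBot (𝓝 0) :=
    ((continuous_lyapunov e).tendsto' _ _ (by simp [lyapunov])).comp hbot
  have hsin : sin x ≠ 0 := by
    intro hsin0
    have hVtop : Tendsto V atTop (𝓝 0) :=
      ((continuous_lyapunov e).tendsto' _ _ (by simp [lyapunov, hsin0])).comp hT
    have hV0 : V = fun _ => 0 := funext (hanti.eq_of_tendsto_atBot_atTop hVbot hVtop)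
    have hΨ'0 : deriv Ψ 0 = 0 := by
      have h := (hV 0).unique (hV0 ▸ hasDerivAt_const 0 (0 : ℝ))
      exact pow_eq_zero_iff two_ne_zero |>.mp <|
        (mul_eq_zero.mp h).resolve_left (mul_ne_zero (by norm_num) hc.ne')
    have h0 : lyapunov e (Ψ 0, deriv Ψ 0) = 0 := congrFun hV0 0
    simp only [lyapunov, hΨ'0] at h0
    have := sin_pos_of_pos_of_lt_pi (hstrip 0).1 (hstrip 0).2
    nlinarith [mul_pos he (pow_pos this 2)]
  have hΨx : Tendsto Ψ atTop (𝓝 x) := (continuous_fst.tendsto _).comp hT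
  have hx : x ∈ Set.Icc 0 π := isClosed_Icc.mem_of_tendsto hΨx
    (Eventually.of_forall fun t => ⟨(hstrip t).1.le, (hstrip t).2.le⟩)
  rwa [eq_pi_div_two_of_cos_eq_zero hx ((mul_eq_zero.mp hsincos).resolve_left hsin)] at hT
end
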